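/- arXiv:1901.08460 — 2 statements merged into one kernel-verified Lean document; each statement's English description precedes it below -/
import Mathlib

section
/- (Averaged per-iteration decrease of decentralized Frank-Wolfe, eq. (expe).) Fix γ ∈ [0,1] and α ∈ M. For each k ∈ {1,…,K}, let s_k ∈ argmin_{‖s‖₁ ≤ β} ⟨s, ∇_k f(α)⟩ and let α̂^(k) be the vector equal to α except that its k-th block is replaced by (1 − γ)α_k + γ s_k. Define gap_k(α) = max_{‖s‖₁ ≤ β} ⟨α_k − s, ∇_k f(α)⟩ and gap(α) = Σ_{k=1}^K gap_k(α). Then, with C_k = 4β²·d_k(w)·( c_k·‖A_k‖₁² + μ₁ ) and C⊗ = Σ_{k=1}^K C_k, (1/K)·Σ_{k=1}^K f(α̂^(k)) ≤ f(α) − (γ/K)·gap(α) + γ²·C⊗/(2K). -/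
/-!
On the line `t ↦ α + t • Pi.single k (s_k - α_k)` through the block update, the objective is a
nonnegative combination of log-sum-exp functions of affine functions of `t` and of squared norms
of affine functions of `t`. The second derivative of a log-sum-exp is a variance, bounded by the
square of the largest slope, here `‖A_k‖₁ ‖s_k - α_k‖₁ ≤ 2β ‖A_k‖₁`; that of `‖v + t w‖²` is
`2 ‖w‖²`, and for symmetric weights the pairs involving block `k` add up to
`μ₁ d_k(w) ‖s_k - α_k‖² ≤ 4β² μ₁ d_k(w)`. Hence `f` on that line lies below its tangent at `0`
plus `C_k t² / 2`, and the slope of the tangent is `⟪∇_k f(α), s_k - α_k⟫ = -gap_k(α)` by the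
choice of `s_k`. Averaging over `k` gives the claim.
-/

open scoped RealInnerProductSpace BigOperators

abbrev Vec (n : ℕ) := EuclideanSpace ℝ (Fin n)

/-- Degree of user `k`: `d_k(w) = Σ_{l≠k} w_{k,l}`. -/
def degW {K : ℕ} (W : Fin K → Fin K → ℝ) (k : Fin K) : ℝ :=
  ∑ l ∈ Finset.univ.filter (fun l => l ≠ k), W k l

/-- The boosting objective
`f(α) = Σ_k d_k(w) c_k log(Σ_i exp(−(A_k α_k)_i)) + (μ₁/2) Σ_{k<l} w_{k,l} ‖α_k − α_l‖²`. -/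
noncomputable def fObj {K n : ℕ} {m : Fin K → ℕ}
    (A : ∀ k, Matrix (Fin (m k)) (Fin n) ℝ) (c : Fin K → ℝ)
    (W : Fin K → Fin K → ℝ) (μ₁ : ℝ) (α : Fin K → Vec n) : ℝ :=
  (∑ k, degW W k * c k *
      Real.log (∑ i, Real.exp (-(Matrix.mulVec (A k) (α k) i))))
    + μ₁ / 2 * ∑ k, ∑ l ∈ Finset.univ.filter (fun l => k < l),
        W k l * ‖α k - α l‖ ^ 2

/-- The partial gradient `∇_k f(α)` of `f` with respect to the block `α_k`. -/
noncomputable def gradBlk {K n : ℕ} (f : (Fin K → Vec n) → ℝ)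
    (α : Fin K → Vec n) (k : Fin K) : Vec n :=
  gradient (fun x => f (Function.update α k x)) (α k)

/-- `‖A‖₁`: the maximum ℓ1 norm of a row of `A`. -/
noncomputable def rowNormOne {m n : ℕ} (A : Matrix (Fin m) (Fin n) ℝ) : ℝ :=
  ⨆ i, ∑ j, |A i j|

/-- The ℓ1 norm on `ℝ^n`. -/
def l1Norm {n : ℕ} (x : Vec n) : ℝ := ∑ j, |x j|

/-- The blockwise Frank-Wolfe surrogate gap
`gap_k(α) = max_{‖s‖₁ ≤ β} ⟨α_k − s, ∇_k f(α)⟩`. -/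
noncomputable def blockGap {n : ℕ} (β : ℝ) (x g : Vec n) : ℝ :=
  sSup {v : ℝ | ∃ s : Vec n, l1Norm s ≤ β ∧ v = ⟪x - s, g⟫}

def HasQuadraticUpperBound (φ : ℝ → ℝ) (D C : ℝ) : Prop :=
  HasDerivAt φ D 0 ∧ ∀ t, φ t ≤ φ 0 + D * t + C / 2 * t ^ 2

theorem hasQuadraticUpperBound_of_deriv2_le {φ φ' φ'' : ℝ → ℝ} {C : ℝ}
    (hφ : ∀ t, HasDerivAt φ (φ' t) t) (hφ' : ∀ t, HasDerivAt φ' (φ'' t) t)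
    (hC : ∀ t, φ'' t ≤ C) : HasQuadraticUpperBound φ (φ' 0) C := by
  set ψ : ℝ → ℝ := fun t => φ t - C / 2 * t ^ 2
  have hψ (t : ℝ) : HasDerivAt ψ (φ' t - C * t) t := by
    refine ((hφ t).sub ((hasDerivAt_pow 2 t).const_mul (C / 2))).congr_deriv ?_
    push_cast
    ring
  have hψ' (t : ℝ) : HasDerivAt (fun t => φ' t - C * t) (φ'' t - C) t := by
    simpa using (hφ' t).fun_sub ((hasDerivAt_id t).const_mul C)
  have hconc : ConcaveOn ℝ Set.univ ψ :=
    concaveOn_of_hasDerivWithinAt2_nonpos convex_univ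
      (fun t _ => (hψ t).continuousAt.continuousWithinAt) (fun t _ => (hψ t).hasDerivWithinAt)
      (fun t _ => (hψ' t).hasDerivWithinAt) (fun t _ => sub_nonpos.mpr (hC t))
  have hψ0 : HasDerivAt ψ (φ' 0) 0 := by simpa using hψ 0
  have htangent (t : ℝ) : ψ t ≤ ψ 0 + φ' 0 * t := by
    rcases lt_trichotomy t 0 with ht | rfl | ht
    · have := hconc.le_slope_of_hasDerivAt trivial trivial ht hψ0
      rw [slope_def_field, le_div_iff₀ (by linarith)] at this
      linarith
    · simp
    · have := hconc.slope_le_of_hasDerivAt trivial trivial ht hψ0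
      rw [slope_def_field, div_le_iff₀ (by linarith)] at this
      linarith
  refine ⟨hφ 0, fun t => ?_⟩
  have := htangent t
  simp only [ψ] at this
  linarith

namespace HasQuadraticUpperBound

variable {φ ψ : ℝ → ℝ} {D D' C C' : ℝ}

theorem add (hφ : HasQuadraticUpperBound φ D C) (hψ : HasQuadraticUpperBound ψ D' C') :
    HasQuadraticUpperBound (fun t => φ t + ψ t) (D + D') (C + C') :=
  ⟨hφ.1.add hψ.1, fun t => by linarith [hφ.2 t, hψ.2 t]⟩

theorem const_mul (hφ : HasQuadraticUpperBound φ D C) {a : ℝ} (ha : 0 ≤ a) :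
    HasQuadraticUpperBound (fun t => a * φ t) (a * D) (a * C) :=
  ⟨hφ.1.const_mul a, fun t => by nlinarith [mul_le_mul_of_nonneg_left (hφ.2 t) ha]⟩

theorem mono (hφ : HasQuadraticUpperBound φ D C) (hC : C ≤ C') :
    HasQuadraticUpperBound φ D C' :=
  ⟨hφ.1, fun t => by nlinarith [hφ.2 t, sq_nonneg t]⟩

theorem sum {ι : Type*} {s : Finset ι} {φ : ι → ℝ → ℝ} {D C : ι → ℝ}
    (h : ∀ i ∈ s, HasQuadraticUpperBound (φ i) (D i) (C i)) :
    HasQuadraticUpperBound (fun t => ∑ i ∈ s, φ i t) (∑ i ∈ s, D i) (∑ i ∈ s, C i) := by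
  classical
  induction s using Finset.induction_on with
  | empty => exact ⟨by simpa using hasDerivAt_const (0 : ℝ) (0 : ℝ), fun t => by simp⟩
  | insert i s hi ih =>
    simp only [Finset.sum_insert hi]
    exact (h i (Finset.mem_insert_self i s)).add
      (ih fun j hj => h j (Finset.mem_insert_of_mem hj))

end HasQuadraticUpperBound

theorem hasDerivAt_sum_mul_exp_affine {ι : Type*} [Fintype ι] (a b c : ι → ℝ) (t : ℝ) :
    HasDerivAt (fun t => ∑ i, c i * Real.exp (a i + t * b i))
      (∑ i, c i * b i * Real.exp (a i + t * b i)) t := by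
  refine HasDerivAt.fun_sum fun i _ => ?_
  have := (((hasDerivAt_mul_const (x := t) (b i)).const_add (a i)).exp).const_mul (c i)
  exact this.congr_deriv (by ring)

theorem hasQuadraticUpperBound_log_sum_exp {ι : Type*} [Fintype ι] (a b : ι → ℝ) {B : ℝ}
    (hb : ∀ i, |b i| ≤ B) :
    HasQuadraticUpperBound (fun t => Real.log (∑ i, Real.exp (a i + t * b i)))
      ((∑ i, b i * Real.exp (a i)) / ∑ i, Real.exp (a i)) (B ^ 2) := by
  cases isEmpty_or_nonempty ι
  · refine ⟨?_, fun t => ?_⟩ <;> simp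
    · exact hasDerivAt_const 0 0
    · positivity
  set S : ℝ → ℝ := fun t => ∑ i, Real.exp (a i + t * b i)
  set S₁ : ℝ → ℝ := fun t => ∑ i, b i * Real.exp (a i + t * b i)
  set S₂ : ℝ → ℝ := fun t => ∑ i, b i * b i * Real.exp (a i + t * b i)
  have hS (t : ℝ) : HasDerivAt S (S₁ t) t := by
    have := hasDerivAt_sum_mul_exp_affine a b (fun _ => 1) t
    simp only [one_mul] at this
    exact this
  have hS₁ (t : ℝ) : HasDerivAt S₁ (S₂ t) t := hasDerivAt_sum_mul_exp_affine a b b t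
  have hS_pos (t : ℝ) : 0 < S t :=
    Finset.sum_pos (fun i _ => by positivity) Finset.univ_nonempty
  have hS₂_le (t : ℝ) : S₂ t ≤ B ^ 2 * S t := by
    simp only [S, S₂, Finset.mul_sum]
    refine Finset.sum_le_sum fun i _ => mul_le_mul_of_nonneg_right ?_ (Real.exp_pos _).le
    nlinarith [sq_abs (b i), abs_nonneg (b i), hb i]
  have hφ (t : ℝ) : HasDerivAt (fun t => Real.log (S t)) (S₁ t / S t) t :=
    (hS t).log (hS_pos t).ne'
  have hφ' (t : ℝ) : HasDerivAt (fun t => S₁ t / S t)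
      ((S₂ t * S t - S₁ t * S₁ t) / S t ^ 2) t :=
    (hS₁ t).div (hS t) (hS_pos t).ne'
  have hvariance (t : ℝ) : (S₂ t * S t - S₁ t * S₁ t) / S t ^ 2 ≤ B ^ 2 := by
    rw [div_le_iff₀ (by positivity)]
    nlinarith [hS₂_le t, hS_pos t, mul_self_nonneg (S₁ t)]
  simpa [S, S₁] using hasQuadraticUpperBound_of_deriv2_le hφ hφ' hvariance

theorem hasQuadraticUpperBound_norm_add_smul_sq {E : Type*} [NormedAddCommGroup E]
    [InnerProductSpace ℝ E] (v w : E) :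
    HasQuadraticUpperBound (fun t => ‖v + t • w‖ ^ 2) (2 * ⟪v, w⟫) (2 * ‖w‖ ^ 2) := by
  have hexpand (t : ℝ) : ‖v + t • w‖ ^ 2 = ‖v‖ ^ 2 + 2 * ⟪v, w⟫ * t + ‖w‖ ^ 2 * t ^ 2 := by
    rw [norm_add_sq_real, inner_smul_right, norm_smul, mul_pow, Real.norm_eq_abs, sq_abs]
    ring
  simp only [hexpand]
  refine ⟨?_, fun t => by simp⟩
  have := (((hasDerivAt_id (0 : ℝ)).const_mul (2 * ⟪v, w⟫)).const_add (‖v‖ ^ 2)).fun_add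
    ((hasDerivAt_pow 2 (0 : ℝ)).const_mul (‖w‖ ^ 2))
  simpa using this

theorem differentiable_log_sum_exp {ι : Type*} [Fintype ι] :
    Differentiable ℝ (fun v : ι → ℝ => Real.log (∑ i, Real.exp (v i))) := by
  cases isEmpty_or_nonempty ι
  · simp
  · exact Differentiable.log (by fun_prop) fun v =>
      (Finset.sum_pos (fun i _ => Real.exp_pos _) Finset.univ_nonempty).ne'

theorem update_add_smul_eq_add_smul_single {ι M : Type*} [DecidableEq ι] [AddCommGroup M]
    [Module ℝ M] (x : ι → M) (k : ι) (u : M) (t : ℝ) :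
    Function.update x k (x k + t • u) = x + t • (Pi.single k u : ι → M) := by
  ext l
  rcases eq_or_ne l k with rfl | hl <;> simp [*]

theorem l1Norm_nonneg {n : ℕ} (x : Vec n) : 0 ≤ l1Norm x :=
  Finset.sum_nonneg fun j _ => abs_nonneg (x j)

theorem l1Norm_sub_le {n : ℕ} (x y : Vec n) : l1Norm (x - y) ≤ l1Norm x + l1Norm y := by
  simp only [l1Norm, ← Finset.sum_add_distrib, PiLp.sub_apply]
  exact Finset.sum_le_sum fun j _ => abs_sub _ _

theorem norm_le_l1Norm {n : ℕ} (x : Vec n) : ‖x‖ ≤ l1Norm x := by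
  rw [EuclideanSpace.norm_eq, Real.sqrt_le_left (l1Norm_nonneg x)]
  have := Finset.sum_sq_le_sq_sum_of_nonneg (s := Finset.univ) (f := fun j => |x j|)
    fun j _ => abs_nonneg (x j)
  simpa [l1Norm, Real.norm_eq_abs, sq_abs] using this

theorem abs_mulVec_le_rowNormOne_mul_l1Norm {m n : ℕ} (M : Matrix (Fin m) (Fin n) ℝ)
    (x : Vec n) (i : Fin m) : |Matrix.mulVec M x i| ≤ rowNormOne M * l1Norm x := by
  have hrow : ∑ j, |M i j| ≤ rowNormOne M :=
    le_ciSup (f := fun i => ∑ j, |M i j|) (Set.finite_range _).bddAbove i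
  calc |Matrix.mulVec M x i| = |∑ j, M i j * x j| := rfl
    _ ≤ ∑ j, |M i j| * |x j| := by
        simpa only [abs_mul] using Finset.abs_sum_le_sum_abs (fun j => M i j * x j) Finset.univ
    _ ≤ ∑ j, |M i j| * l1Norm x := by
        gcongr with j
        exact Finset.single_le_sum (fun j _ => abs_nonneg (x j)) (Finset.mem_univ j)
    _ ≤ rowNormOne M * l1Norm x := by
        rw [← Finset.sum_mul]
        exact mul_le_mul_of_nonneg_right hrow (l1Norm_nonneg x)

theorem blockGap_eq_inner_sub {n : ℕ} {β : ℝ} {x s g : Vec n} (hs : l1Norm s ≤ β)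
    (hmin : ∀ s', l1Norm s' ≤ β → ⟪s, g⟫ ≤ ⟪s', g⟫) : blockGap β x g = ⟪x - s, g⟫ := by
  refine IsGreatest.csSup_eq ⟨⟨s, hs, rfl⟩, ?_⟩
  rintro v ⟨s', hs', rfl⟩
  simp only [inner_sub_left]
  linarith [hmin s' hs']

theorem degW_nonneg {K : ℕ} {W : Fin K → Fin K → ℝ} (hWnn : ∀ k l, k ≠ l → 0 ≤ W k l)
    (k : Fin K) : 0 ≤ degW W k :=
  Finset.sum_nonneg fun l hl => hWnn k l (Finset.mem_filter.mp hl).2.symm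

theorem sum_pairs_mul_norm_sub_single_sq {K : ℕ} {E : Type*} [NormedAddCommGroup E]
    {W : Fin K → Fin K → ℝ} (hWsym : ∀ k l, W k l = W l k) (k : Fin K) (u : E) :
    ∑ p, ∑ q ∈ Finset.univ.filter (fun q => p < q),
        W p q * ‖(Pi.single k u : Fin K → E) p - (Pi.single k u : Fin K → E) q‖ ^ 2
      = degW W k * ‖u‖ ^ 2 := by
  have hterm (p q : Fin K) (hpq : p < q) :
      ‖(Pi.single k u : Fin K → E) p - (Pi.single k u : Fin K → E) q‖ ^ 2
        = (if p = k then ‖u‖ ^ 2 else 0) + (if q = k then ‖u‖ ^ 2 else 0) := by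
    rcases eq_or_ne p k with rfl | hp
    · simp [hpq.ne']
    · rcases eq_or_ne q k with rfl | hq <;> simp [*]
  have hdeg : degW W k = ∑ q ∈ Finset.univ.filter (fun q => k < q), W k q
      + ∑ p ∈ Finset.univ.filter (fun p => p < k), W p k := by
    simp only [degW, Finset.sum_filter, ← Finset.sum_add_distrib]
    refine Finset.sum_congr rfl fun l _ => ?_
    rcases lt_trichotomy l k with h | rfl | h
    · simp [h, h.ne, not_lt_of_gt h, hWsym l k]
    · simp
    · simp [h, h.ne', not_lt_of_gt h]
  rw [hdeg, add_mul, Finset.sum_mul, Finset.sum_mul]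
  calc _ = ∑ p, ∑ q ∈ Finset.univ.filter (fun q => p < q),
        ((if p = k then W p q * ‖u‖ ^ 2 else 0) + (if q = k then W p q * ‖u‖ ^ 2 else 0)) := by
        refine Finset.sum_congr rfl fun p _ => Finset.sum_congr rfl fun q hq => ?_
        rw [hterm p q (Finset.mem_filter.mp hq).2]
        split_ifs <;> ring
    _ = _ := by
        simp only [Finset.sum_add_distrib, Finset.sum_ite_irrel, Finset.sum_const_zero,
          Finset.sum_ite_eq', Finset.mem_univ, if_true]
        congr 1
        simp [Finset.sum_filter]

section Objective

variable {K n : ℕ} {m : Fin K → ℕ} (A : ∀ k, Matrix (Fin (m k)) (Fin n) ℝ)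

theorem differentiable_fObj (c : Fin K → ℝ) (W : Fin K → Fin K → ℝ) (μ₁ : ℝ) :
    Differentiable ℝ (fObj A c W μ₁) := by
  have hlse (k : Fin K) : Differentiable ℝ
      (fun α : Fin K → Vec n => Real.log (∑ i, Real.exp (-(Matrix.mulVec (A k) (α k) i)))) := by
    refine differentiable_log_sum_exp.comp
      (f := fun α : Fin K → Vec n => fun i => -(Matrix.mulVec (A k) (α k) i)) ?_
    simp only [Matrix.mulVec, dotProduct]
    fun_prop
  have hsq (k l : Fin K) : Differentiable ℝ (fun α : Fin K → Vec n => ‖α k - α l‖ ^ 2) :=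
    ((differentiable_apply k).sub (differentiable_apply l)).norm_sq ℝ
  unfold fObj
  fun_prop

theorem fObj_add_smul (c : Fin K → ℝ) (W : Fin K → Fin K → ℝ) (μ₁ : ℝ) (α e : Fin K → Vec n)
    (t : ℝ) :
    fObj A c W μ₁ (α + t • e)
      = (∑ k, degW W k * c k * Real.log (∑ i, Real.exp
          (-Matrix.mulVec (A k) (α k) i + t * -Matrix.mulVec (A k) (e k) i)))
        + μ₁ / 2 * ∑ p, ∑ q ∈ Finset.univ.filter (fun q => p < q),
            W p q * ‖(α p - α q) + t • (e p - e q)‖ ^ 2 := by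
  simp only [fObj, Pi.add_apply, Pi.smul_apply, WithLp.ofLp_add, WithLp.ofLp_smul,
    Matrix.mulVec_add, Matrix.mulVec_smul, smul_sub, smul_eq_mul, neg_add, mul_neg]
  congr 3 with p
  simp only [add_sub_add_comm]

variable {c : Fin K → ℝ} {W : Fin K → Fin K → ℝ} {μ₁ : ℝ}

theorem exists_hasQuadraticUpperBound_fObj_line (hc : ∀ k, 0 ≤ c k)
    (hWnn : ∀ k l, k ≠ l → 0 ≤ W k l) (hμ₁ : 0 ≤ μ₁) (α e : Fin K → Vec n) :
    ∃ D, HasQuadraticUpperBound (fun t => fObj A c W μ₁ (α + t • e)) D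
      ((∑ k, degW W k * c k * (rowNormOne (A k) * l1Norm (e k)) ^ 2)
        + μ₁ * ∑ p, ∑ q ∈ Finset.univ.filter (fun q => p < q), W p q * ‖e p - e q‖ ^ 2) := by
  simp only [fObj_add_smul]
  have hloss (k : Fin K) := (hasQuadraticUpperBound_log_sum_exp
    (B := rowNormOne (A k) * l1Norm (e k)) (fun i => -Matrix.mulVec (A k) (α k) i)
    (fun i => -Matrix.mulVec (A k) (e k) i) fun i => by
      simpa only [abs_neg] using abs_mulVec_le_rowNormOne_mul_l1Norm (A k) (e k) i).const_mul
    (mul_nonneg (degW_nonneg hWnn k) (hc k))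
  have hpenalty (p : Fin K) (q : Fin K) (hq : q ∈ Finset.univ.filter (fun q => p < q)) :=
    (hasQuadraticUpperBound_norm_add_smul_sq (α p - α q) (e p - e q)).const_mul
      (hWnn p q (Finset.mem_filter.mp hq).2.ne)
  refine ⟨_, ((HasQuadraticUpperBound.sum fun k _ => hloss k).add
    ((HasQuadraticUpperBound.sum fun p _ => HasQuadraticUpperBound.sum (hpenalty p)).const_mul
      (by positivity : 0 ≤ μ₁ / 2))).mono (le_of_eq ?_)⟩
  simp only [mul_left_comm _ (2 : ℝ), ← Finset.mul_sum]
  ring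

theorem exists_hasQuadraticUpperBound_fObj_update (hc : ∀ k, 0 ≤ c k)
    (hWsym : ∀ k l, W k l = W l k) (hWnn : ∀ k l, k ≠ l → 0 ≤ W k l) (hμ₁ : 0 ≤ μ₁) {β : ℝ}
    (α : Fin K → Vec n) (k : Fin K) {u : Vec n} (hu : l1Norm u ≤ 2 * β) :
    ∃ D, HasQuadraticUpperBound (fun t => fObj A c W μ₁ (Function.update α k (α k + t • u))) D
      (4 * β ^ 2 * degW W k * (c k * rowNormOne (A k) ^ 2 + μ₁)) := by
  simp only [update_add_smul_eq_add_smul_single]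
  obtain ⟨D, hD⟩ := exists_hasQuadraticUpperBound_fObj_line A hc hWnn hμ₁ α (Pi.single k u)
  rw [Finset.sum_eq_single k (fun l _ hl => by simp [hl, l1Norm]) (by simp),
    sum_pairs_mul_norm_sub_single_sq hWsym k u, Pi.single_eq_same] at hD
  refine ⟨D, hD.mono ?_⟩
  have hd := degW_nonneg hWnn k
  have h₁ : (rowNormOne (A k) * l1Norm u) ^ 2 ≤ rowNormOne (A k) ^ 2 * (2 * β) ^ 2 := by
    rw [mul_pow]
    gcongr
    exact l1Norm_nonneg u
  have h₂ : ‖u‖ ^ 2 ≤ (2 * β) ^ 2 := by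
    gcongr
    exact (norm_le_l1Norm u).trans hu
  nlinarith [mul_le_mul_of_nonneg_left h₁ (mul_nonneg hd (hc k)),
    mul_le_mul_of_nonneg_left h₂ (mul_nonneg hμ₁ hd)]

theorem hasDerivAt_fObj_update (α : Fin K → Vec n) (k : Fin K) (u : Vec n) :
    HasDerivAt (fun t : ℝ => fObj A c W μ₁ (Function.update α k (α k + t • u)))
      ⟪gradBlk (fObj A c W μ₁) α k, u⟫ 0 := by
  have hdiff : DifferentiableAt ℝ (fun x => fObj A c W μ₁ (Function.update α k x)) (α k) :=
    (differentiable_fObj A c W μ₁).differentiableAt.comp _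
      (hasFDerivAt_update α (α k)).differentiableAt
  have := hdiff.hasGradientAt.hasFDerivAt.hasLineDerivAt u
  simp only [HasLineDerivAt, InnerProductSpace.toDual_apply_apply] at this
  exact this

theorem fObj_update_frankWolfe_le (hc : ∀ k, 0 ≤ c k) (hWsym : ∀ k l, W k l = W l k)
    (hWnn : ∀ k l, k ≠ l → 0 ≤ W k l) (hμ₁ : 0 ≤ μ₁) {β : ℝ} (α : Fin K → Vec n) (k : Fin K)
    (hα : l1Norm (α k) ≤ β) {s : Vec n} (hs : l1Norm s ≤ β)
    (hmin : ∀ s' : Vec n, l1Norm s' ≤ β →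
      ⟪s, gradBlk (fObj A c W μ₁) α k⟫ ≤ ⟪s', gradBlk (fObj A c W μ₁) α k⟫) (γ : ℝ) :
    fObj A c W μ₁ (Function.update α k ((1 - γ) • α k + γ • s))
      ≤ fObj A c W μ₁ α - γ * blockGap β (α k) (gradBlk (fObj A c W μ₁) α k)
        + γ ^ 2 * (4 * β ^ 2 * degW W k * (c k * rowNormOne (A k) ^ 2 + μ₁)) / 2 := by
  set g := gradBlk (fObj A c W μ₁) α k
  set u := s - α k
  obtain ⟨D, hD⟩ := exists_hasQuadraticUpperBound_fObj_update A hc hWsym hWnn hμ₁ α k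
    ((l1Norm_sub_le s (α k)).trans (by linarith) : l1Norm u ≤ 2 * β)
  have hslope : D = ⟪g, u⟫ := hD.1.unique (hasDerivAt_fObj_update A α k u)
  have hgap : blockGap β (α k) g = -⟪g, u⟫ := by
    rw [blockGap_eq_inner_sub hs hmin, real_inner_comm, ← inner_neg_right, neg_sub]
  have hstep : (1 - γ) • α k + γ • s = α k + γ • u := by
    simp only [u, sub_smul, one_smul, smul_sub]
    abel
  have := hD.2 γ
  simp only [zero_smul, add_zero, Function.update_eq_self] at this
  rw [hstep, hgap, ← hslope]
  linarith

end Objective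

theorem averaged_frank_wolfe_decrease_general
    (K n : ℕ) (hK : 1 ≤ K) (m : Fin K → ℕ)
    (A : ∀ k, Matrix (Fin (m k)) (Fin n) ℝ)
    (c : Fin K → ℝ) (hc : ∀ k, 0 ≤ c k)
    (W : Fin K → Fin K → ℝ) (hWsym : ∀ k l, W k l = W l k)
    (hWnn : ∀ k l, k ≠ l → 0 ≤ W k l)
    (μ₁ : ℝ) (hμ₁ : 0 ≤ μ₁) (β : ℝ)
    (γ : ℝ)
    (α : Fin K → Vec n) (hα : ∀ j, l1Norm (α j) ≤ β)
    (s : Fin K → Vec n) (hs : ∀ k, l1Norm (s k) ≤ β)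
    (hargmin : ∀ k, ∀ s' : Vec n, l1Norm s' ≤ β →
      ⟪s k, gradBlk (fObj A c W μ₁) α k⟫ ≤ ⟪s', gradBlk (fObj A c W μ₁) α k⟫) :
    (1 / (K : ℝ)) *
        ∑ k, fObj A c W μ₁ (Function.update α k ((1 - γ) • α k + γ • s k))
      ≤ fObj A c W μ₁ α
        - γ / K * (∑ k, blockGap β (α k) (gradBlk (fObj A c W μ₁) α k))
        + γ ^ 2 * (∑ k, 4 * β ^ 2 * degW W k * (c k * rowNormOne (A k) ^ 2 + μ₁))
            / (2 * K) := by
  have hK₀ : (K : ℝ) ≠ 0 := Nat.cast_ne_zero.mpr (by omega)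
  calc (1 / (K : ℝ)) * ∑ k, fObj A c W μ₁ (Function.update α k ((1 - γ) • α k + γ • s k))
      ≤ (1 / (K : ℝ)) * ∑ k, (fObj A c W μ₁ α
          - γ * blockGap β (α k) (gradBlk (fObj A c W μ₁) α k)
          + γ ^ 2 * (4 * β ^ 2 * degW W k * (c k * rowNormOne (A k) ^ 2 + μ₁)) / 2) := by
        gcongr with k
        exact fObj_update_frankWolfe_le A hc hWsym hWnn hμ₁ α k (hα k) (hs k) (hargmin k) γ
    _ = _ := by
        simp only [Finset.sum_add_distrib, Finset.sum_sub_distrib, Finset.sum_const,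
          Finset.card_univ, Fintype.card_fin, nsmul_eq_mul, ← Finset.mul_sum, ← Finset.sum_div]
        field_simp

/-- Averaged per-iteration decrease of decentralized Frank-Wolfe (eq. (expe)).
If for each `k`, `s_k` minimizes `⟨s, ∇_k f(α)⟩` over the ℓ1 ball of radius `β` and
`α̂^(k)` is the corresponding blockwise Frank-Wolfe update, then
`(1/K) Σ_k f(α̂^(k)) ≤ f(α) − (γ/K)·gap(α) + γ²C⊗/(2K)` where `gap(α) = Σ_k gap_k(α)`
and `C⊗ = Σ_k 4β² d_k(w)(c_k ‖A_k‖₁² + μ₁)`. -/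
theorem averaged_frank_wolfe_decrease
    (K n : ℕ) (hK : 1 ≤ K) (m : Fin K → ℕ)
    (A : ∀ k, Matrix (Fin (m k)) (Fin n) ℝ)
    (c : Fin K → ℝ) (hc : ∀ k, 0 ≤ c k)
    (W : Fin K → Fin K → ℝ) (hWsym : ∀ k l, W k l = W l k)
    (hWnn : ∀ k l, k ≠ l → 0 ≤ W k l)
    (μ₁ : ℝ) (hμ₁ : 0 ≤ μ₁) (β : ℝ) (hβ : 0 < β)
    (γ : ℝ) (hγ0 : 0 ≤ γ) (hγ1 : γ ≤ 1)
    (α : Fin K → Vec n) (hα : ∀ j, l1Norm (α j) ≤ β)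
    (s : Fin K → Vec n) (hs : ∀ k, l1Norm (s k) ≤ β)
    (hargmin : ∀ k, ∀ s' : Vec n, l1Norm s' ≤ β →
      ⟪s k, gradBlk (fObj A c W μ₁) α k⟫ ≤ ⟪s', gradBlk (fObj A c W μ₁) α k⟫) :
    (1 / (K : ℝ)) *
        ∑ k, fObj A c W μ₁ (Function.update α k ((1 - γ) • α k + γ • s k))
      ≤ fObj A c W μ₁ α
        - γ / K * (∑ k, blockGap β (α k) (gradBlk (fObj A c W μ₁) α k))
        + γ ^ 2 * (∑ k, 4 * β ^ 2 * degW W k * (c k * rowNormOne (A k) ^ 2 + μ₁))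
            / (2 * K) :=
  averaged_frank_wolfe_decrease_general K n hK m A c hc W hWsym hWnn μ₁ hμ₁ β γ α hα s hs hargmin
end

section
/- (Lipschitz bound for the inverse-degree terms of the proposed graph regularizer.) Let K ≥ 2, δ > 0, k ∈ [K], and 𝒦 ⊆ [K]\{k} with |𝒦| = κ ≥ 1. Let w, w' ∈ ℝ^{K(K−1)/2} with w ≥ 0 and w' ≥ 0 that agree on every coordinate outside the block {(k,l) : l ∈ 𝒦}. Define z_{k,𝒦}(w) = ( 1/(d_k(w) + δ) + 1/(d_l(w) + δ) )_{l ∈ 𝒦} ∈ ℝ^κ. Then ‖z_{k,𝒦}(w) − z_{k,𝒦}(w')‖₂ ≤ ((κ+1)/δ²)·‖w_{k,𝒦} − w'_{k,𝒦}‖₂, where w_{k,𝒦} = (w_{k,l})_{l∈𝒦}. -/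
open scoped BigOperators

/-- Coordinates are indexed by unordered pairs of distinct elements of `[K]`,
represented as ordered pairs `(i,j)` with `i < j`; there are `K(K−1)/2` of them. -/
abbrev PairIdx (K : ℕ) := {q : Fin K × Fin K // q.1 < q.2}

/-- Weight vectors live in `ℝ^{K(K−1)/2}` with the Euclidean structure. -/
abbrev GVec (K : ℕ) := EuclideanSpace ℝ (PairIdx K)

/-- Degree of user `k`: `d_k(w) = Σ_{l≠k} w_{k,l}`. -/
noncomputable def deg {K : ℕ} (w : GVec K) (k : Fin K) : ℝ :=
  ∑ q : PairIdx K, (if q.1.1 = k ∨ q.1.2 = k then w q else 0)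

/-- The entry `w_{k,l}` of a weight vector (`0` on the diagonal). -/
noncomputable def ent {K : ℕ} (w : GVec K) (k l : Fin K) : ℝ :=
  if h : k < l then w ⟨(k, l), h⟩ else if h' : l < k then w ⟨(l, k), h'⟩ else 0

/-- The coordinate `{i,j}` belongs to the block `(k,𝒦)` iff it is of the form `{k,l}`
with `l ∈ 𝒦`. -/
def inBlk {K : ℕ} (k : Fin K) (S : Finset (Fin K)) (q : PairIdx K) : Prop :=
  (q.1.1 = k ∧ q.1.2 ∈ S) ∨ (q.1.2 = k ∧ q.1.1 ∈ S)

/-!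
Changing the weights `w_{k,l}`, `l ∈ 𝒦`, by `a_l` changes `d_k` by `Σ_l a_l` and each `d_l`
by `a_l` alone. Since `x ↦ 1/(x+δ)` is `1/δ²`-Lipschitz on `[0, ∞)`, the `l`-th coordinate of
`z` moves by at most `(‖a‖₁ + |a_l|)/δ²`, and Cauchy–Schwarz `‖a‖₁ ≤ √κ ‖a‖₂` turns the
`ℓ²` norm of these bounds into `(κ+1)‖a‖₂/δ²`.
-/

lemma abs_one_div_add_sub_one_div_add_le {x y δ : ℝ} (hx : 0 ≤ x) (hy : 0 ≤ y) (hδ : 0 < δ) :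
    |1 / (x + δ) - 1 / (y + δ)| ≤ |x - y| / δ ^ 2 := by
  have hxδ : 0 < x + δ := by linarith
  have hyδ : 0 < y + δ := by linarith
  rw [one_div, one_div, inv_sub_inv hxδ.ne' hyδ.ne', abs_div, abs_of_pos (mul_pos hxδ hyδ),
    add_sub_add_right_eq_sub, abs_sub_comm]
  gcongr
  nlinarith

section WeightVectors

variable {K : ℕ}

lemma ent_comm (w : GVec K) (k l : Fin K) : ent w k l = ent w l k := by
  unfold ent
  rcases lt_trichotomy k l with h | rfl | h
  · simp [h, h.not_gt]
  · rfl
  · simp [h, h.not_gt]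

lemma ent_eq_sum (w : GVec K) (k l : Fin K) :
    ent w k l = ∑ q : PairIdx K, if q.1 = (k, l) ∨ q.1 = (l, k) then w q else 0 := by
  unfold ent
  rcases lt_trichotomy k l with h | rfl | h
  · rw [dif_pos h, Fintype.sum_eq_single ⟨(k, l), h⟩]
    · simp
    · rintro ⟨⟨i, j⟩, hij⟩ hq
      simp only [ne_eq, Subtype.mk.injEq, Prod.mk.injEq] at hq ⊢
      grind
  · simp only [lt_irrefl, dif_neg, not_false_eq_true, or_self]
    refine (Finset.sum_eq_zero fun ⟨⟨i, j⟩, hij⟩ _ => ?_).symm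
    simp only [Prod.mk.injEq, ite_eq_right_iff]
    grind
  · rw [dif_neg h.not_gt, dif_pos h, Fintype.sum_eq_single ⟨(l, k), h⟩]
    · simp
    · rintro ⟨⟨i, j⟩, hij⟩ hq
      simp only [ne_eq, Subtype.mk.injEq, Prod.mk.injEq] at hq ⊢
      grind

lemma deg_eq_sum_ent (w : GVec K) (k : Fin K) : deg w k = ∑ l, ent w k l := by
  simp_rw [ent_eq_sum, deg]
  rw [Finset.sum_comm]
  refine Finset.sum_congr rfl fun q _ => ?_
  obtain ⟨⟨i, j⟩, hij⟩ := q
  by_cases hi : i = k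
  · subst hi
    rw [if_pos (Or.inl rfl), Finset.sum_eq_single j]
    · simp
    · intro l _ hl
      simp only [Prod.mk.injEq, ite_eq_right_iff]
      omega
    · simp
  by_cases hj : j = k
  · subst hj
    rw [if_pos (Or.inr rfl), Finset.sum_eq_single i]
    · simp
    · intro l _ hl
      simp only [Prod.mk.injEq, ite_eq_right_iff]
      omega
    · simp
  · rw [if_neg (by tauto)]
    refine (Finset.sum_eq_zero fun l _ => ?_).symm
    simp only [Prod.mk.injEq, ite_eq_right_iff]
    omega

lemma ent_eq_ent_of_not_inBlk {k : Fin K} {S : Finset (Fin K)} {w w' : GVec K}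
    (hagree : ∀ q, ¬ inBlk k S q → w q = w' q) {i j : Fin K}
    (hij : ¬ ((i = k ∧ j ∈ S) ∨ (j = k ∧ i ∈ S))) : ent w i j = ent w' i j := by
  unfold ent
  split_ifs <;> first | rfl | exact hagree _ (by unfold inBlk; tauto)

lemma deg_nonneg {w : GVec K} (hw : ∀ q, 0 ≤ w q) (k : Fin K) : 0 ≤ deg w k :=
  Finset.sum_nonneg fun q _ => by split_ifs <;> simp [hw q]

section BlockPerturbation

variable {k : Fin K} {S : Finset (Fin K)} {w w' : GVec K}

lemma deg_sub_deg_eq_sum (hkS : k ∉ S) (hagree : ∀ q, ¬ inBlk k S q → w q = w' q) :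
    deg w k - deg w' k = ∑ l ∈ S, (ent w k l - ent w' k l) := by
  rw [deg_eq_sum_ent, deg_eq_sum_ent, ← Finset.sum_sub_distrib]
  refine (Finset.sum_subset (Finset.subset_univ S) fun l _ hl => ?_).symm
  rw [sub_eq_zero, ent_eq_ent_of_not_inBlk hagree]
  tauto

lemma deg_sub_deg_eq_of_mem (hkS : k ∉ S) (hagree : ∀ q, ¬ inBlk k S q → w q = w' q)
    {l : Fin K} (hl : l ∈ S) :
    deg w l - deg w' l = ent w k l - ent w' k l := by
  have hlk : l ≠ k := ne_of_mem_of_not_mem hl hkS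
  rw [deg_eq_sum_ent, deg_eq_sum_ent, ← Finset.sum_sub_distrib,
    Finset.sum_eq_single_of_mem k (Finset.mem_univ k) fun j _ hj => ?_, ent_comm w, ent_comm w']
  rw [sub_eq_zero, ent_eq_ent_of_not_inBlk hagree]
  tauto

end BlockPerturbation

end WeightVectors

section EuclideanBound

open Finset

variable {ι : Type*} (S : Finset ι) (a : ι → ℝ)

lemma sum_sq_sum_abs_add_abs_le :
    ∑ l ∈ S, (∑ j ∈ S, |a j| + |a l|) ^ 2 ≤ (#S + 1) ^ 2 * ∑ l ∈ S, a l ^ 2 := by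
  set s := ∑ j ∈ S, |a j|
  have hcs : s ^ 2 ≤ #S * ∑ l ∈ S, a l ^ 2 := by
    simpa only [sq_abs] using sq_sum_le_card_mul_sum_sq (s := S) (f := fun l => |a l|)
  have hexpand : ∑ l ∈ S, (s + |a l|) ^ 2 = (#S + 2) * s ^ 2 + ∑ l ∈ S, a l ^ 2 := by
    simp only [add_sq, sq_abs, sum_add_distrib, sum_const, nsmul_eq_mul, ← mul_sum]
    ring
  rw [hexpand]
  nlinarith [mul_le_mul_of_nonneg_left hcs (by positivity : (0 : ℝ) ≤ #S + 2)]

lemma sqrt_sum_sq_le_of_abs_le {f : ι → ℝ} {C : ℝ} (hC : 0 ≤ C)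
    (hf : ∀ l ∈ S, |f l| ≤ C * (∑ j ∈ S, |a j| + |a l|)) :
    √(∑ l ∈ S, f l ^ 2) ≤ (#S + 1) * C * √(∑ l ∈ S, a l ^ 2) := by
  rw [Real.sqrt_le_iff]
  refine ⟨by positivity, ?_⟩
  calc ∑ l ∈ S, f l ^ 2
      ≤ ∑ l ∈ S, (C * (∑ j ∈ S, |a j| + |a l|)) ^ 2 :=
        sum_le_sum fun l hl => sq_le_sq' (abs_le.mp (hf l hl)).1 (abs_le.mp (hf l hl)).2
    _ = C ^ 2 * ∑ l ∈ S, (∑ j ∈ S, |a j| + |a l|) ^ 2 := by simp only [mul_pow, ← mul_sum]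
    _ ≤ C ^ 2 * ((#S + 1) ^ 2 * ∑ l ∈ S, a l ^ 2) := by
        gcongr; exact sum_sq_sum_abs_add_abs_le S a
    _ = ((#S + 1) * C * √(∑ l ∈ S, a l ^ 2)) ^ 2 := by
        rw [mul_pow, Real.sq_sqrt (by positivity)]; ring

end EuclideanBound

theorem inverse_degree_terms_lipschitz_general
    (K : ℕ) (δ : ℝ) (hδ : 0 < δ)
    (k : Fin K) (S : Finset (Fin K)) (hkS : k ∉ S) (κ : ℕ) (hcard : S.card = κ)
    (w w' : GVec K) (hw : ∀ q, 0 ≤ w q) (hw' : ∀ q, 0 ≤ w' q)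
    (hagree : ∀ q, ¬ inBlk k S q → w q = w' q) :
    Real.sqrt (∑ l ∈ S,
        ((1 / (deg w k + δ) + 1 / (deg w l + δ))
          - (1 / (deg w' k + δ) + 1 / (deg w' l + δ))) ^ 2)
      ≤ ((κ : ℝ) + 1) / δ ^ 2 *
        Real.sqrt (∑ l ∈ S, (ent w k l - ent w' k l) ^ 2) := by
  rw [div_eq_mul_one_div ((κ : ℝ) + 1), ← hcard]
  refine sqrt_sum_sq_le_of_abs_le S _ (by positivity) fun l hl => ?_
  have hk := abs_one_div_add_sub_one_div_add_le (deg_nonneg hw k) (deg_nonneg hw' k) hδ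
  have hl' := abs_one_div_add_sub_one_div_add_le (deg_nonneg hw l) (deg_nonneg hw' l) hδ
  rw [deg_sub_deg_eq_sum hkS hagree] at hk
  rw [deg_sub_deg_eq_of_mem hkS hagree hl] at hl'
  rw [add_sub_add_comm, one_div_mul_eq_div, add_div]
  refine (abs_add_le _ _).trans ((add_le_add hk hl').trans ?_)
  gcongr
  exact Finset.abs_sum_le_sum_abs _ _

/-- Lipschitz bound for the inverse-degree terms of the proposed graph
regularizer: with `z_{k,𝒦}(w) = (1/(d_k(w)+δ) + 1/(d_l(w)+δ))_{l∈𝒦}`, for `w, w' ≥ 0`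
agreeing outside the block `(k,𝒦)`,
`‖z_{k,𝒦}(w) − z_{k,𝒦}(w')‖₂ ≤ ((κ+1)/δ²)‖w_{k,𝒦} − w'_{k,𝒦}‖₂`. -/
theorem inverse_degree_terms_lipschitz
    (K : ℕ) (hK : 2 ≤ K) (δ : ℝ) (hδ : 0 < δ)
    (k : Fin K) (S : Finset (Fin K)) (hkS : k ∉ S) (κ : ℕ) (hcard : S.card = κ)
    (hκ : 1 ≤ κ)
    (w w' : GVec K) (hw : ∀ q, 0 ≤ w q) (hw' : ∀ q, 0 ≤ w' q)
    (hagree : ∀ q, ¬ inBlk k S q → w q = w' q) :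
    Real.sqrt (∑ l ∈ S,
        ((1 / (deg w k + δ) + 1 / (deg w l + δ))
          - (1 / (deg w' k + δ) + 1 / (deg w' l + δ))) ^ 2)
      ≤ ((κ : ℝ) + 1) / δ ^ 2 *
        Real.sqrt (∑ l ∈ S, (ent w k l - ent w' k l) ^ 2) :=
  inverse_degree_terms_lipschitz_general K δ hδ k S hkS κ hcard w w' hw hw' hagree
end
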